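/- For every n ≥ 1, the intrinsic frontier (relative boundary, i.e., the frontier computed inside the affine span) of the permutohedron Π_{n−1} equals the union of the facets F_S over all nonempty proper subsets S ⊆ {1,…,n}. Equivalently, a point x ∈ Π_{n−1} lies in the intrinsic interior of Π_{n−1} if and only if ∑_{i∈S} x_i > |S|(|S|+1)/2 for every nonempty proper subset S. -/

import Mathlib

/-
The permutohedron is the polytope `∑ x = n(n+1)/2`, `∑_{i ∈ S} x_i ≥ |S|(|S|+1)/2` (Rado).
The inequalities hold at the vertices because distinct positive integers sum to at least a
triangular number. Conversely, the sets `S` on which an extreme point `x` of the polytope is tight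
form a chain, by strict supermodularity of `k(k+1)/2`, and the chain has a member of every size:
otherwise two coordinates not separated by any tight set could trade mass in both directions
without leaving the polytope. A full chain of tight sets forces `x` to be a vertex, and
Krein–Milman gives the equality.

The affine span lies in the hyperplane `∑ x = n(n+1)/2` and contains every direction `e_i - e_j`.
Inside that hyperplane the strict inequalities cut out an open set. Conversely, from a point of
the intrinsic interior one can still move a little in a direction `e_j - e_i` with `i ∈ S`,
`j ∉ S`; this lowers `∑_{i ∈ S} x_i`, which therefore exceeds its lower bound.
-/

/-- The vertex `v_σ` of the permutohedron: its `i`-th coordinate is `σ⁻¹(i)`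
(with values in `{1, …, n}`). -/
noncomputable def permuVertex (n : ℕ) (σ : Equiv.Perm (Fin n)) : Fin n → ℝ :=
  fun i => ((σ⁻¹ i : ℕ) : ℝ) + 1

/-- The `(n-1)`-dimensional permutohedron `Π_{n-1} ⊆ ℝ^n`: the convex hull
of the `n!` points `v_σ`. -/
noncomputable def permutohedron (n : ℕ) : Set (Fin n → ℝ) :=
  convexHull ℝ (Set.range (permuVertex n))

/-- The facet `F_S` of the permutohedron, for a nonempty proper `S ⊆ {1, …, n}` with
`|S| = k`: the points of the permutohedron where `∑_{i ∈ S} x_i = k(k+1)/2`. -/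
noncomputable def facet (n : ℕ) (S : Finset (Fin n)) : Set (Fin n → ℝ) :=
  {x ∈ permutohedron n |
    ∑ i ∈ S, x i = ((S.card : ℝ) * ((S.card : ℝ) + 1)) / 2}

open Finset Topology

section

variable {𝕜 V P : Type*} [Ring 𝕜] [AddCommGroup V] [Module 𝕜 V] [TopologicalSpace P]
  [AddTorsor V P]

theorem mem_intrinsicInterior_iff_exists_isOpen {s : Set P} {x : P} :
    x ∈ intrinsicInterior 𝕜 s ↔
      x ∈ affineSpan 𝕜 s ∧ ∃ U, IsOpen U ∧ x ∈ U ∧ U ∩ affineSpan 𝕜 s ⊆ s := by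
  constructor
  · rintro ⟨y, hy, rfl⟩
    obtain ⟨t, hts, ht, hyt⟩ := mem_interior.1 hy
    obtain ⟨U, hU, rfl⟩ := isOpen_induced_iff.1 ht
    exact ⟨y.2, U, hU, hyt, fun z hz =>
      hts (show (⟨z, hz.2⟩ : affineSpan 𝕜 s) ∈ _ from hz.1)⟩
  · rintro ⟨hx, U, hU, hxU, hUs⟩
    exact ⟨⟨x, hx⟩, mem_interior.2 ⟨_, fun z hz => hUs ⟨hz, z.2⟩,
      hU.preimage continuous_subtype_val, hxU⟩, rfl⟩

end

noncomputable def triangular (k : ℕ) : ℝ := k * (k + 1) / 2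

theorem sum_range_add_one_eq_triangular (k : ℕ) :
    ∑ j ∈ range k, ((j : ℝ) + 1) = triangular k := by
  induction k with
  | zero => simp [triangular]
  | succ k ih => rw [sum_range_succ, ih]; simp only [triangular]; push_cast; ring

theorem triangular_add_triangular_lt {a b u i : ℕ} (hu : u + i = a + b) (hia : i < a)
    (hib : i < b) : triangular a + triangular b < triangular u + triangular i := by
  have hc : (u : ℝ) + i = a + b := by exact_mod_cast hu
  have ha : (i : ℝ) < a := by exact_mod_cast hia
  have hb : (i : ℝ) < b := by exact_mod_cast hib
  unfold triangular
  nlinarith [mul_pos (sub_pos.2 ha) (sub_pos.2 hb)]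

def permutohedronIneq (n : ℕ) : Set (Fin n → ℝ) :=
  {x | ∑ i, x i = triangular n ∧ ∀ S : Finset (Fin n), triangular #S ≤ ∑ i ∈ S, x i}

def IsTight {n : ℕ} (x : Fin n → ℝ) (S : Finset (Fin n)) : Prop :=
  ∑ i ∈ S, x i = triangular #S

section

variable {n : ℕ}

theorem triangular_le_sum_permuVertex (σ : Equiv.Perm (Fin n)) (S : Finset (Fin n)) :
    triangular #S ≤ ∑ i ∈ S, permuVertex n σ i := by
  have hinj : Set.InjOn (fun i => ((σ⁻¹ i : ℕ) : ℤ)) S := fun a _ b _ h =>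
    σ⁻¹.injective (Fin.ext (Nat.cast_injective h))
  have key := Finset.sum_range_le_sum (s := S.image fun i => ((σ⁻¹ i : ℕ) : ℤ)) (c := 0)
    (by simp)
  rw [card_image_of_injOn hinj, sum_image hinj] at key
  simp only [zero_add] at key
  have hreal : ∑ m ∈ range #S, (m : ℝ) ≤ ∑ i ∈ S, ((σ⁻¹ i : ℕ) : ℝ) := by
    have := (Int.cast_le (R := ℝ)).2 key
    push_cast at this
    exact this
  rw [← sum_range_add_one_eq_triangular]
  simp only [permuVertex, sum_add_distrib, sum_const, card_range]
  linarith

theorem sum_permuVertex (σ : Equiv.Perm (Fin n)) : ∑ i, permuVertex n σ i = triangular n := by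
  rw [← sum_range_add_one_eq_triangular, ← Fin.sum_univ_eq_sum_range]
  exact Equiv.sum_comp σ⁻¹ fun i => ((i : ℕ) : ℝ) + 1

theorem permuVertex_mem_permutohedronIneq (σ : Equiv.Perm (Fin n)) :
    permuVertex n σ ∈ permutohedronIneq n :=
  ⟨sum_permuVertex σ, triangular_le_sum_permuVertex σ⟩

theorem convex_permutohedronIneq : Convex ℝ (permutohedronIneq n) := by
  intro x hx y hy a b ha hb hab
  have hsum : ∀ S : Finset (Fin n), ∑ i ∈ S, (a • x + b • y) i
      = a * ∑ i ∈ S, x i + b * ∑ i ∈ S, y i := by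
    intro S; simp [sum_add_distrib, mul_sum]
  refine ⟨?_, fun S => ?_⟩
  · rw [hsum, hx.1, hy.1, ← add_mul, hab, one_mul]
  · have : a * triangular #S + b * triangular #S = triangular #S := by
      rw [← add_mul, hab, one_mul]
    rw [hsum]
    nlinarith [mul_le_mul_of_nonneg_left (hx.2 S) ha, mul_le_mul_of_nonneg_left (hy.2 S) hb]

theorem isClosed_permutohedronIneq : IsClosed (permutohedronIneq n) := by
  simp only [permutohedronIneq, Set.ofPred_and, Set.ofPred_forall]
  refine (isClosed_eq (by fun_prop) continuous_const).inter ?_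
  exact isClosed_iInter fun S => isClosed_le continuous_const (by fun_prop)

theorem permutohedronIneq_subset_Icc :
    permutohedronIneq n ⊆ Set.Icc (fun _ => 0) (fun _ => triangular n) := by
  rintro x ⟨hsum, hS⟩
  refine ⟨fun i =>
    (zero_le_one' ℝ).trans (by simpa [triangular] using hS {i}), fun i => ?_⟩
  have hrest : 0 ≤ ∑ j ∈ univ.erase i, x j :=
    (div_nonneg (by positivity) zero_le_two).trans (hS _)
  have := add_sum_erase univ x (mem_univ i)
  simp only at *
  linarith

theorem isCompact_permutohedronIneq : IsCompact (permutohedronIneq n) :=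
  isCompact_Icc.of_isClosed_subset isClosed_permutohedronIneq permutohedronIneq_subset_Icc

theorem isClosed_permutohedron : IsClosed (permutohedron n) :=
  (Set.finite_range _).isClosed_convexHull (𝕜 := ℝ)

theorem permutohedron_subset_permutohedronIneq : permutohedron n ⊆ permutohedronIneq n :=
  convexHull_min (Set.range_subset_iff.2 permuVertex_mem_permutohedronIneq) convex_permutohedronIneq

theorem isTight_univ {x : Fin n → ℝ} (hx : x ∈ permutohedronIneq n) : IsTight x univ := by
  simpa [IsTight] using hx.1

theorem IsTight.subset_or_subset {x : Fin n → ℝ} (hx : x ∈ permutohedronIneq n)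
    {S T : Finset (Fin n)} (hS : IsTight x S) (hT : IsTight x T) : S ⊆ T ∨ T ⊆ S := by
  by_contra! h
  have hlt := triangular_add_triangular_lt (card_union_add_card_inter S T)
    (card_lt_card (inf_lt_left.2 h.1)) (card_lt_card (inf_lt_right.2 h.2))
  have := sum_union_inter (s₁ := S) (s₂ := T) (f := x)
  unfold IsTight at hS hT
  linarith [hx.2 (S ∪ T), hx.2 (S ∩ T)]

theorem isOpen_setOf_triangular_lt (p : Finset (Fin n) → Prop) :
    IsOpen {y : Fin n → ℝ | ∀ S, p S → triangular #S < ∑ i ∈ S, y i} := by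
  simp only [Set.ofPred_forall]
  exact isOpen_iInter_of_finite fun S => isOpen_iInter_of_finite fun _ =>
    isOpen_lt continuous_const (by fun_prop)

theorem sum_single_sub_single {i j : Fin n} {S : Finset (Fin n)} (h : i ∈ S ↔ j ∈ S) :
    ∑ l ∈ S, (Pi.single i 1 - Pi.single j 1 : Fin n → ℝ) l = 0 := by
  simp [sum_sub_distrib, sum_pi_single', h]

theorem notMem_extremePoints_of_isTight_sum_eq_zero {x d : Fin n → ℝ}
    (hx : x ∈ permutohedronIneq n) (hd : d ≠ 0)
    (htight : ∀ S, IsTight x S → ∑ i ∈ S, d i = 0) :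
    x ∉ (permutohedronIneq n).extremePoints ℝ := by
  set U := {y : Fin n → ℝ | ∀ S, ¬IsTight x S → triangular #S < ∑ i ∈ S, y i}
  have hxU : x ∈ U := fun S hS => lt_of_le_of_ne (hx.2 S) (Ne.symm hS)
  have hmem : ∀ t : ℝ, x + t • d ∈ U → x + t • d ∈ permutohedronIneq n := by
    intro t ht
    have hsum : ∀ S, ∑ i ∈ S, (x + t • d) i = ∑ i ∈ S, x i + t * ∑ i ∈ S, d i := by
      intro S; simp [sum_add_distrib, mul_sum]
    refine ⟨by rw [hsum, htight univ (isTight_univ hx), mul_zero, add_zero]; exact hx.1, fun S => ?_⟩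
    by_cases hS : IsTight x S
    · rw [hsum, htight S hS, mul_zero, add_zero]; exact hx.2 S
    · exact (ht S hS).le
  have hev : ∀ᶠ t in 𝓝 (0 : ℝ), x + t • d ∈ U := by
    have hcont : Continuous fun t : ℝ => x + t • d := by fun_prop
    exact hcont.tendsto' 0 x (by simp) |>.eventually
      ((isOpen_setOf_triangular_lt _).mem_nhds hxU)
  have hev' : ∀ᶠ t in 𝓝 (0 : ℝ), x + (-t) • d ∈ U :=
    (continuous_neg.tendsto' 0 0 neg_zero).eventually hev
  obtain ⟨t, ⟨ht₁, ht₂⟩, ht⟩ :=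
    ((hev.and hev').filter_mono nhdsWithin_le_nhds |>.and self_mem_nhdsWithin).exists
      (f := 𝓝[≠] (0 : ℝ))
  intro hext
  have hseg : x ∈ openSegment ℝ (x + t • d) (x + (-t) • d) :=
    ⟨1 / 2, 1 / 2, by norm_num, by norm_num, by norm_num, by
      rw [neg_smul]; module⟩
  have := hext.2 (hmem t ht₁) (hmem (-t) ht₂) hseg
  exact hd ((smul_eq_zero.1 (add_eq_left.1 this)).resolve_left ht)

theorem exists_isTight_card_eq {x : Fin n → ℝ}
    (hx : x ∈ (permutohedronIneq n).extremePoints ℝ) :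
    ∀ k ≤ n, ∃ S, IsTight x S ∧ #S = k := by
  classical
  intro k hk
  induction k with
  | zero => exact ⟨∅, by simp [IsTight, triangular], rfl⟩
  | succ k ih =>
    obtain ⟨F, hF, rfl⟩ := ih (by omega)
    obtain ⟨T, hTmem, hTmin⟩ :=
      exists_min_image (univ.filter fun T => IsTight x T ∧ #F < #T) card
      ⟨univ, by simpa [isTight_univ hx.1] using hk⟩
    simp only [mem_filter, mem_univ, true_and] at hTmem hTmin
    refine ⟨T, hTmem.1, ?_⟩
    by_contra hne
    have hFT : F ⊆ T := (hF.subset_or_subset hx.1 hTmem.1).resolve_right fun h => by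
      have := card_le_card h; omega
    have hsplit : ∀ U, IsTight x U → U ⊆ F ∨ T ⊆ U := by
      intro U hU
      rcases hU.subset_or_subset hx.1 hF with hUF | hFU
      · exact .inl hUF
      obtain rfl | hne' := eq_or_ne U F
      · exact .inl subset_rfl
      have hFU' : #F < #U := card_lt_card (hFU.ssubset_of_ne hne'.symm)
      rcases hU.subset_or_subset hx.1 hTmem.1 with hUT | hTU
      · exact .inr (eq_of_subset_of_card_le hUT (hTmin U ⟨hU, hFU'⟩)).symm.subset
      · exact .inr hTU
    -- `T \ F` has two points, and no tight set separates them
    obtain ⟨i, hi, j, hj, hij⟩ := one_lt_card.1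
      (show 1 < #(T \ F) by rw [card_sdiff_of_subset hFT]; omega)
    rw [mem_sdiff] at hi hj
    refine notMem_extremePoints_of_isTight_sum_eq_zero hx.1 (d := Pi.single i 1 - Pi.single j 1)
      (fun h => by simpa [hij] using congrFun h i) (fun U hU => ?_) hx
    apply sum_single_sub_single
    rcases hsplit U hU with h | h
    · exact iff_of_false (fun hiU => hi.2 (h hiU)) (fun hjU => hj.2 (h hjU))
    · exact iff_of_true (h hi.1) (h hj.1)

theorem IsTight.exists_eq_card_add_one {x : Fin n → ℝ} (hx : x ∈ permutohedronIneq n)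
    {A B : Finset (Fin n)} (hA : IsTight x A) (hB : IsTight x B) (hcard : #B = #A + 1) :
    ∃ i, x i = #A + 1 := by
  classical
  have hAB : A ⊆ B := (hA.subset_or_subset hx hB).resolve_right fun h => by
    have := card_le_card h; omega
  obtain ⟨i, hi⟩ := card_eq_one.1 (show #(B \ A) = 1 by rw [card_sdiff_of_subset hAB]; omega)
  refine ⟨i, ?_⟩
  have := sum_sdiff hAB (f := x)
  rw [hi, sum_singleton, hA, hB, hcard] at this
  unfold triangular at this
  push_cast at this
  linarith

theorem mem_range_permuVertex_of_mem_extremePoints {x : Fin n → ℝ}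
    (hx : x ∈ (permutohedronIneq n).extremePoints ℝ) : x ∈ Set.range (permuVertex n) := by
  have hval : ∀ k : Fin n, ∃ i, x i = (k : ℕ) + 1 := fun k => by
    obtain ⟨A, hA, hAk⟩ := exists_isTight_card_eq hx k k.is_lt.le
    obtain ⟨B, hB, hBk⟩ := exists_isTight_card_eq hx (k + 1) k.is_lt
    simpa [hAk] using hA.exists_eq_card_add_one hx.1 hB (by omega)
  choose g hg using hval
  have hinj : Function.Injective g := fun a b h => by
    have := hg a
    rw [h, hg b, add_left_inj, Nat.cast_inj] at this
    exact Fin.ext this.symm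
  set e := Equiv.ofBijective g hinj.bijective_of_finite
  refine ⟨e, funext fun i => ?_⟩
  have := hg (e.symm i)
  rw [show g (e.symm i) = i from e.apply_symm_apply i] at this
  rw [permuVertex, this]
  rfl

theorem permutohedron_eq_permutohedronIneq : permutohedron n = permutohedronIneq n := by
  refine permutohedron_subset_permutohedronIneq.antisymm ?_
  calc permutohedronIneq n
      = closure (convexHull ℝ ((permutohedronIneq n).extremePoints ℝ)) :=
        (closure_convexHull_extremePoints isCompact_permutohedronIneq
          convex_permutohedronIneq).symm
    _ ⊆ closure (permutohedron n) :=
        closure_mono (convexHull_mono fun x hx => mem_range_permuVertex_of_mem_extremePoints hx)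
    _ = permutohedron n := isClosed_permutohedron.closure_eq

theorem sum_eq_triangular_of_mem_affineSpan {y : Fin n → ℝ}
    (hy : y ∈ affineSpan ℝ (permutohedron n)) : ∑ i, y i = triangular n := by
  refine affineSpan_induction hy (fun y hy => (permutohedron_subset_permutohedronIneq hy).1)
    fun c u v w hu hv hw => ?_
  simp only [vsub_eq_sub, vadd_eq_add, Pi.add_apply, Pi.smul_apply, Pi.sub_apply, smul_eq_mul,
    sum_add_distrib, ← mul_sum, sum_sub_distrib, hu, hv, hw]
  ring

theorem single_sub_single_mem_direction (a b : Fin n) :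
    (Pi.single a 1 - Pi.single b 1 : Fin n → ℝ) ∈ (affineSpan ℝ (permutohedron n)).direction := by
  obtain rfl | hab := eq_or_ne a b
  · simp
  have hmem : ∀ σ, permuVertex n σ ∈ affineSpan ℝ (permutohedron n) := fun σ =>
    subset_affineSpan ℝ _ (subset_convexHull ℝ _ ⟨σ, rfl⟩)
  have hdiff : permuVertex n (Equiv.swap a b) - permuVertex n 1
      = ((b : ℕ) - (a : ℕ) : ℝ) • (Pi.single a 1 - Pi.single b 1) := by
    funext l
    simp only [permuVertex, Pi.sub_apply, Pi.smul_apply, smul_eq_mul, Equiv.swap_inv, inv_one,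
      Equiv.Perm.one_apply, Pi.single_apply, Equiv.swap_apply_def]
    split_ifs <;> simp_all
  have hne : ((b : ℕ) - (a : ℕ) : ℝ) ≠ 0 :=
    sub_ne_zero.2 (by exact_mod_cast Fin.val_injective.ne hab.symm)
  rw [← Submodule.smul_mem_iff _ hne, ← hdiff]
  exact AffineSubspace.vsub_mem_direction (hmem _) (hmem _)

theorem triangular_lt_sum_of_mem_intrinsicInterior {x : Fin n → ℝ}
    (hx : x ∈ intrinsicInterior ℝ (permutohedron n)) {S : Finset (Fin n)} (hS : S.Nonempty)
    (hSu : S ≠ univ) : triangular #S < ∑ i ∈ S, x i := by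
  obtain ⟨hxA, U, hU, hxU, hUs⟩ := mem_intrinsicInterior_iff_exists_isOpen.1 hx
  obtain ⟨i, hi⟩ := hS
  obtain ⟨j, hj⟩ : ∃ j, j ∉ S := by simpa [eq_univ_iff_forall] using hSu
  set d : Fin n → ℝ := Pi.single j 1 - Pi.single i 1
  have hline : ∀ t : ℝ, x + t • d ∈ affineSpan ℝ (permutohedron n) := fun t => by
    rw [add_comm, ← vadd_eq_add]
    exact AffineSubspace.vadd_mem_of_mem_direction
      (Submodule.smul_mem _ t (single_sub_single_mem_direction j i)) hxA
  have hev : ∀ᶠ t in 𝓝 (0 : ℝ), x + t • d ∈ U := by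
    have hcont : Continuous fun t : ℝ => x + t • d := by fun_prop
    exact hcont.tendsto' 0 x (by simp) |>.eventually (hU.mem_nhds hxU)
  obtain ⟨t, htU, htpos⟩ :=
    (hev.filter_mono nhdsWithin_le_nhds |>.and self_mem_nhdsWithin).exists (f := 𝓝[>] (0 : ℝ))
  have hle := (permutohedron_subset_permutohedronIneq (hUs ⟨htU, hline t⟩)).2 S
  have hsum : ∑ l ∈ S, (x + t • d) l = ∑ l ∈ S, x l - t := by
    simp only [d, Pi.add_apply, Pi.smul_apply, Pi.sub_apply, smul_eq_mul, sum_add_distrib,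
      ← mul_sum, sum_sub_distrib, sum_pi_single', if_pos hi, if_neg hj]
    ring
  rw [hsum] at hle
  linarith [show (0 : ℝ) < t from htpos]

theorem mem_intrinsicInterior_of_triangular_lt {x : Fin n → ℝ} (hx : x ∈ permutohedron n)
    (h : ∀ S : Finset (Fin n), S.Nonempty → S ≠ univ → triangular #S < ∑ i ∈ S, x i) :
    x ∈ intrinsicInterior ℝ (permutohedron n) := by
  refine mem_intrinsicInterior_iff_exists_isOpen.2 ⟨subset_affineSpan ℝ _ hx, _,
    isOpen_setOf_triangular_lt fun S => S.Nonempty ∧ S ≠ univ, fun S hS => h S hS.1 hS.2, ?_⟩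
  rintro y ⟨hyU, hyA⟩
  have hsum := sum_eq_triangular_of_mem_affineSpan hyA
  rw [permutohedron_eq_permutohedronIneq]
  refine ⟨hsum, fun S => ?_⟩
  obtain rfl | hS := S.eq_empty_or_nonempty
  · simp [triangular]
  obtain rfl | hSu := eq_or_ne S univ
  · simp [hsum]
  exact (hyU S ⟨hS, hSu⟩).le

end

theorem statement8_general (n : ℕ) :
    (intrinsicFrontier ℝ (permutohedron n) =
      ⋃ (S : Finset (Fin n)) (_ : S.Nonempty) (_ : S ≠ Finset.univ), facet n S) ∧
    (∀ x ∈ permutohedron n,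
      (x ∈ intrinsicInterior ℝ (permutohedron n) ↔
        ∀ S : Finset (Fin n), S.Nonempty → S ≠ Finset.univ →
          ((S.card : ℝ) * ((S.card : ℝ) + 1)) / 2 < ∑ i ∈ S, x i)) := by
  have hint : ∀ x ∈ permutohedron n, (x ∈ intrinsicInterior ℝ (permutohedron n) ↔
      ∀ S : Finset (Fin n), S.Nonempty → S ≠ univ → triangular #S < ∑ i ∈ S, x i) :=
    fun x hx => ⟨fun h _ hS hSu => triangular_lt_sum_of_mem_intrinsicInterior h hS hSu,
      mem_intrinsicInterior_of_triangular_lt hx⟩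
  refine ⟨?_, hint⟩
  rw [← closure_sdiff_intrinsicInterior, isClosed_permutohedron.closure_eq]
  ext x
  simp only [Set.mem_sdiff, Set.mem_iUnion, facet, Set.mem_ofPred_eq]
  constructor
  · rintro ⟨hx, hxi⟩
    obtain ⟨S, hS, hSu, hle⟩ : ∃ S : Finset (Fin n), S.Nonempty ∧ S ≠ univ ∧
        ∑ i ∈ S, x i ≤ triangular #S := by
      simpa using (hint x hx).not.1 hxi
    exact ⟨S, hS, hSu, hx, le_antisymm hle ((permutohedron_subset_permutohedronIneq hx).2 S)⟩
  · rintro ⟨S, hS, hSu, hx, heq⟩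
    exact ⟨hx, fun hxi => ((hint x hx).1 hxi S hS hSu).ne' heq⟩

/-- The intrinsic frontier of the permutohedron is the union of its facets `F_S`;
equivalently a point of the permutohedron is in the intrinsic interior iff all the
half-space inequalities are strict. -/
theorem statement8 (n : ℕ) (hn : 1 ≤ n) :
    (intrinsicFrontier ℝ (permutohedron n) =
      ⋃ (S : Finset (Fin n)) (_ : S.Nonempty) (_ : S ≠ Finset.univ), facet n S) ∧
    (∀ x ∈ permutohedron n,
      (x ∈ intrinsicInterior ℝ (permutohedron n) ↔
        ∀ S : Finset (Fin n), S.Nonempty → S ≠ Finset.univ →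
          ((S.card : ℝ) * ((S.card : ℝ) + 1)) / 2 < ∑ i ∈ S, x i)) :=
  statement8_general n
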